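/- Let n, m ≥ 2, let N = 2(n−1), let P be an N×(m−1) matrix of nonnegative integers, let U be an integer vector of length n and V an integer vector of length m, and define M[x,y] = U[x] + V[y] + Σ_{i=2x−1}^{N} Σ_{j=y}^{m−1} P[i,j] for 1 ≤ x ≤ n, 1 ≤ y ≤ m. Let H be a weighted digraph that is a DAG with integer weights containing distinct vertices r[1],…,r[N] and c[1],…,c[m−1] such that for all 1 ≤ x ≤ N and 1 ≤ y ≤ m−1 a directed path from r[x] to c[y] exists and d_H(r[x], c[y]) = Σ_{i=x}^{N} Σ_{j=y}^{m−1} P[i,j], and in which each r[x] has no incoming edges and each c[y] has no outgoing edges. Form H′ from H by adding fresh vertices r₀[1],…,r₀[n] and c₀[1],…,c₀[m] and the following edges: r₀[x] → r[2x−1] with weight U[x] for each 1 ≤ x ≤ n−1; c[y] → c₀[y] with weight V[y] for each 1 ≤ y ≤ m−1; r₀[x] → c₀[m] with weight U[x] + V[m] for each 1 ≤ x ≤ n−1; and r₀[n] → c₀[y] with weight U[n] + V[y] for each 1 ≤ y ≤ m. Then for all 1 ≤ x ≤ n and 1 ≤ y ≤ m, a directed path from r₀[x] to c₀[y] exists in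 H′ and d_{H′}(r₀[x], c₀[y]) = M[x,y]. -/

import Mathlib

/-- A weighted digraph: a finite vertex set `V ⊆ ℕ`, an edge set `E ⊆ V × V`,
and an integer weight function on edges. -/
structure WDigraph where
  V : Finset ℕ
  E : Finset (ℕ × ℕ)
  w : ℕ × ℕ → ℤ
  edge_fst : ∀ e ∈ E, e.1 ∈ V
  edge_snd : ∀ e ∈ E, e.2 ∈ V

/-- The weight of a walk, given as the list of its vertices, under weight
function `w`: the sum of the weights of its consecutive edges. -/
def walkWeight (w : ℕ × ℕ → ℤ) (l : List ℕ) : ℤ :=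
  ((l.zip l.tail).map w).sum

/-- A directed walk in `H`: a nonempty list of vertices of `H` in which each
consecutive pair is an edge of `H`. -/
def IsWalk (H : WDigraph) (l : List ℕ) : Prop :=
  l ≠ [] ∧ (∀ v ∈ l, v ∈ H.V) ∧ List.Chain' (fun u v => (u, v) ∈ H.E) l

/-- A directed walk in `H` from `u` to `v`. -/
def IsWalkFromTo (H : WDigraph) (l : List ℕ) (u v : ℕ) : Prop :=
  IsWalk H l ∧ l.head? = some u ∧ l.getLast? = some v

/-- A directed path in `H` from `u` to `v`: a walk with no repeated vertex. -/
def IsPathFromTo (H : WDigraph) (l : List ℕ) (u v : ℕ) : Prop :=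
  IsWalkFromTo H l u v ∧ l.Nodup

/-- `H` is a DAG: it contains no directed cycle, i.e. no closed walk using at
least one edge. -/
def IsDAG (H : WDigraph) : Prop :=
  ¬ ∃ (v : ℕ) (l : List ℕ), 2 ≤ l.length ∧ IsWalkFromTo H l v v

/-- `d` is the distance from `u` to `v` in `H` under weight function `w`:
some directed path from `u` to `v` attains weight `d`, and every directed path
from `u` to `v` has weight at least `d`. -/
def HasDistW (H : WDigraph) (w : ℕ × ℕ → ℤ) (u v : ℕ) (d : ℤ) : Prop :=
  (∃ l, IsPathFromTo H l u v ∧ walkWeight w l = d) ∧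
  ∀ l, IsPathFromTo H l u v → d ≤ walkWeight w l

/-- The size of a weighted digraph: number of vertices plus number of edges. -/
def WDigraph.size (H : WDigraph) : ℕ := H.V.card + H.E.card

/-! The vertices `r₀ x` are sources and the `c₀ y` sinks of `H'`, so every vertex of `H'` with
both an incoming and an outgoing edge lies in `H`, and a path from `r₀ x` to `c₀ y` is either a
single new edge or a new edge into `H`, a path of `H`, and a new edge out of `H`. For `x < n` and
`y < m` the only neighbours available are `r₀ x → r (2x-1)` and `c y → c₀ y`, so the distance is
`U x + d_H(r (2x-1), c y) + V y = M x y`. For `x = n` (resp. `y = m`) the vertex `r₀ x` has no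
out-neighbour (resp. `c₀ y` no in-neighbour) in `H`, the direct edge is the only path, and the
double sum in `M x y` is empty. -/

theorem List.IsChain.exists_rel_of_mem_middle {α : Type*} {R : α → α → Prop} {u v : α} :
    ∀ {l : List α}, List.IsChain R (u :: l ++ [v]) → ∀ z ∈ l, (∃ p, R p z) ∧ ∃ s, R z s
  | [], _, _, hz => by simp at hz
  | [a], h, z, hz => by
      obtain rfl : z = a := List.mem_singleton.1 hz
      obtain ⟨hua, hav⟩ := List.isChain_cons_cons.1 h
      exact ⟨⟨u, hua⟩, v, hav.rel⟩
  | a :: b :: t, h, z, hz => by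
      obtain ⟨hua, hab⟩ := List.isChain_cons_cons.1 h
      rcases List.mem_cons.1 hz with rfl | hz
      · exact ⟨⟨u, hua⟩, b, hab.rel⟩
      · exact hab.exists_rel_of_mem_middle z hz

theorem List.exists_eq_cons_append_singleton {α : Type*} {l : List α} {u v : α} (huv : u ≠ v)
    (hu : l.head? = some u) (hv : l.getLast? = some v) : ∃ mid, l = u :: mid ++ [v] := by
  obtain _ | ⟨a, t⟩ := l
  · simp at hu
  obtain rfl : a = u := by simpa using hu
  obtain rfl | ⟨mid, b, rfl⟩ := t.eq_nil_or_concat'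
  · exact absurd (by simpa using hv) huv
  · rw [← List.cons_append, List.getLast?_concat, Option.some_inj] at hv
    exact ⟨mid, by rw [hv]; rfl⟩

theorem walkWeight_cons_cons (w : ℕ × ℕ → ℤ) (a b : ℕ) (l : List ℕ) :
    walkWeight w (a :: b :: l) = w (a, b) + walkWeight w (b :: l) := by
  simp [walkWeight]

theorem walkWeight_cons {w : ℕ × ℕ → ℤ} {l : List ℕ} {a : ℕ} (ha : l.head? = some a) (u : ℕ) :
    walkWeight w (u :: l) = w (u, a) + walkWeight w l := by
  obtain _ | ⟨a', t⟩ := l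
  · simp at ha
  · obtain rfl : a' = a := by simpa using ha
    exact walkWeight_cons_cons w u a' t

theorem walkWeight_append_singleton {w : ℕ × ℕ → ℤ} :
    ∀ {l : List ℕ} {b : ℕ}, l.getLast? = some b → ∀ v,
      walkWeight w (l ++ [v]) = walkWeight w l + w (b, v)
  | [], _, hb, _ => by simp at hb
  | [a], b, hb, v => by
      obtain rfl : a = b := by simpa using hb
      simp [walkWeight]
  | a :: a' :: t, b, hb, v => by
      rw [List.getLast?_cons_cons] at hb
      rw [List.cons_append, List.cons_append, walkWeight_cons_cons, walkWeight_cons_cons,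
        ← List.cons_append, walkWeight_append_singleton hb, add_assoc]

theorem walkWeight_cons_append_singleton {w : ℕ × ℕ → ℤ} {l : List ℕ} {a b : ℕ}
    (ha : l.head? = some a) (hb : l.getLast? = some b) (u v : ℕ) :
    walkWeight w (u :: l ++ [v]) = w (u, a) + walkWeight w l + w (b, v) := by
  rw [List.cons_append, walkWeight_cons (a := a) (by simp [List.head?_append, ha]),
    walkWeight_append_singleton hb, add_assoc]

theorem walkWeight_congr {w w' : ℕ × ℕ → ℤ} {E : Finset (ℕ × ℕ)} (hw : ∀ e ∈ E, w e = w' e) :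
    ∀ {l : List ℕ}, l.IsChain (fun u v => (u, v) ∈ E) → walkWeight w l = walkWeight w' l
  | [], _ | [_], _ => rfl
  | a :: b :: t, h => by
      obtain ⟨hab, ht⟩ := List.isChain_cons_cons.1 h
      rw [walkWeight_cons_cons, walkWeight_cons_cons, hw _ hab, walkWeight_congr hw ht]

theorem isWalk_iff {H : WDigraph} {l : List ℕ} :
    IsWalk H l ↔ l ≠ [] ∧ (∀ v ∈ l, v ∈ H.V) ∧ l.IsChain (fun u v => (u, v) ∈ H.E) := Iff.rfl

namespace WDigraph

/-- Every vertex of `H'` outside `H` is a source or a sink, so a path of `H'` can leave `H` only at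
its two ends. -/
structure IsCore (H H' : WDigraph) : Prop where
  V_subset : H.V ⊆ H'.V
  E_subset : H.E ⊆ H'.E
  mem_E_of_mem_V : ∀ u v, (u, v) ∈ H'.E → u ∈ H.V → v ∈ H.V → (u, v) ∈ H.E
  mem_V_of_rel_rel : ∀ p z s, (p, z) ∈ H'.E → (z, s) ∈ H'.E → z ∈ H.V
  w_eq : ∀ e ∈ H.E, H'.w e = H.w e

namespace IsCore

variable {H H' : WDigraph} {u v a b : ℕ}

theorem exists_isWalkFromTo_middle (hH : H.IsCore H') {mid : List ℕ}
    (hl : IsWalk H' (u :: mid ++ [v])) (hmid : mid ≠ []) :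
    ∃ a b, (u, a) ∈ H'.E ∧ (b, v) ∈ H'.E ∧ IsWalkFromTo H mid a b := by
  obtain ⟨-, -, hchain⟩ := isWalk_iff.1 hl
  have hmidV : ∀ z ∈ mid, z ∈ H.V := fun z hz =>
    have ⟨⟨p, hp⟩, s, hs⟩ := hchain.exists_rel_of_mem_middle z hz
    hH.mem_V_of_rel_rel p z s hp hs
  obtain ⟨a, t, rfl⟩ := List.exists_cons_of_ne_nil hmid
  rw [List.isChain_append, List.isChain_cons_cons, List.getLast?_cons_cons] at hchain
  obtain ⟨⟨hua, hmidE⟩, -, hbv⟩ := hchain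
  have hb := List.getLast?_eq_some_getLast hmid
  refine ⟨a, _, hua, hbv _ hb v rfl, ⟨hmid, hmidV, ?_⟩, rfl, hb⟩
  exact hmidE.imp_of_mem_imp fun x y hx hy hxy =>
    hH.mem_E_of_mem_V x y hxy (hmidV x hx) (hmidV y hy)

theorem walkWeight_eq (hH : H.IsCore H') {l : List ℕ} (hl : IsWalk H l) :
    walkWeight H'.w l = walkWeight H.w l :=
  walkWeight_congr hH.w_eq (isWalk_iff.1 hl).2.2

theorem isPathFromTo_cons_append (hH : H.IsCore H') {p : List ℕ} (hp : IsPathFromTo H p a b)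
    (hua : (u, a) ∈ H'.E) (hbv : (b, v) ∈ H'.E) (hu : u ∉ H.V) (hv : v ∉ H.V) (huv : u ≠ v) :
    IsPathFromTo H' (u :: p ++ [v]) u v := by
  obtain ⟨⟨⟨hne, hpV, hpE⟩, ha, hb⟩, hnodup⟩ := hp
  obtain ⟨c, t, rfl⟩ := List.exists_cons_of_ne_nil hne
  obtain rfl : c = a := by simpa using ha
  refine ⟨⟨isWalk_iff.2 ⟨by simp, ?_, ?_⟩, rfl, List.getLast?_concat⟩, ?_⟩
  · intro z hz
    rcases List.mem_append.1 hz with hz | hz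
    · rcases List.mem_cons.1 hz with rfl | hz
      · exact H'.edge_fst _ hua
      · exact hH.V_subset (hpV z hz)
    · obtain rfl := List.mem_singleton.1 hz
      exact H'.edge_snd _ hbv
  · rw [List.isChain_append, List.isChain_cons_cons, List.getLast?_cons_cons, hb]
    refine ⟨⟨hua, hpE.imp fun x y hxy => hH.E_subset hxy⟩, List.isChain_singleton v, ?_⟩
    rintro x ⟨⟩ y ⟨⟩
    exact hbv
  · have hp_ne : ∀ z ∈ c :: t, z ≠ u ∧ z ≠ v := fun z hz =>
      ⟨fun h => hu (h ▸ hpV z hz), fun h => hv (h ▸ hpV z hz)⟩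
    rw [List.nodup_append, List.nodup_cons]
    refine ⟨⟨fun h => (hp_ne u h).1 rfl, hnodup⟩, List.nodup_singleton v, fun z hz y hy => ?_⟩
    rw [List.mem_singleton.1 hy]
    rcases List.mem_cons.1 hz with rfl | hz
    · exact huv
    · exact (hp_ne z hz).2

theorem hasDistW_cons_append (hH : H.IsCore H') {d : ℤ} (hd : HasDistW H H.w a b d)
    (hu : u ∉ H.V) (hv : v ∉ H.V) (huv : u ≠ v) (hua : (u, a) ∈ H'.E) (hbv : (b, v) ∈ H'.E)
    (huv_notMem : (u, v) ∉ H'.E)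
    (hout : ∀ z ∈ H.V, (u, z) ∈ H'.E → z = a) (hin : ∀ z ∈ H.V, (z, v) ∈ H'.E → z = b) :
    HasDistW H' H'.w u v (H'.w (u, a) + d + H'.w (b, v)) := by
  obtain ⟨⟨p, hp, hpw⟩, hmin⟩ := hd
  refine ⟨⟨u :: p ++ [v], hH.isPathFromTo_cons_append hp hua hbv hu hv huv, ?_⟩, fun l hl => ?_⟩
  · rw [walkWeight_cons_append_singleton hp.1.2.1 hp.1.2.2, hH.walkWeight_eq hp.1.1, hpw]
  obtain ⟨mid, rfl⟩ := List.exists_eq_cons_append_singleton huv hl.1.2.1 hl.1.2.2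
  rcases eq_or_ne mid [] with rfl | hmid
  · exact absurd (List.isChain_pair.1 (isWalk_iff.1 hl.1.1).2.2) huv_notMem
  obtain ⟨a', b', hua', hbv', hmidw⟩ := hH.exists_isWalkFromTo_middle hl.1.1 hmid
  have hmidV := (isWalk_iff.1 hmidw.1).2.1
  obtain rfl : a' = a := hout a' (hmidV a' (List.mem_of_mem_head? hmidw.2.1)) hua'
  obtain rfl : b' = b := hin b' (hmidV b' (List.mem_of_mem_getLast? hmidw.2.2)) hbv'
  have hmidpath : IsPathFromTo H mid a' b' :=
    ⟨hmidw, hl.2.sublist ((List.sublist_cons_self u mid).trans (List.sublist_append_left _ [v]))⟩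
  rw [walkWeight_cons_append_singleton hmidw.2.1 hmidw.2.2, hH.walkWeight_eq hmidw.1]
  linarith [hmin mid hmidpath]

theorem eq_pair_of_isWalkFromTo (hH : H.IsCore H')
    (hend : (∀ z ∈ H.V, (u, z) ∉ H'.E) ∨ ∀ z ∈ H.V, (z, v) ∉ H'.E) (huv : u ≠ v) {l : List ℕ}
    (hl : IsWalkFromTo H' l u v) : l = [u, v] := by
  obtain ⟨mid, rfl⟩ := List.exists_eq_cons_append_singleton huv hl.2.1 hl.2.2
  rcases eq_or_ne mid [] with rfl | hmid
  · rfl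
  obtain ⟨a, b, hua, hbv, hmidw⟩ := hH.exists_isWalkFromTo_middle hl.1 hmid
  have hmidV := (isWalk_iff.1 hmidw.1).2.1
  rcases hend with hu | hv
  · exact absurd hua (hu a (hmidV a (List.mem_of_mem_head? hmidw.2.1)))
  · exact absurd hbv (hv b (hmidV b (List.mem_of_mem_getLast? hmidw.2.2)))

theorem hasDistW_pair (hH : H.IsCore H')
    (hend : (∀ z ∈ H.V, (u, z) ∉ H'.E) ∨ ∀ z ∈ H.V, (z, v) ∉ H'.E) (huv : u ≠ v)
    (he : (u, v) ∈ H'.E) : HasDistW H' H'.w u v (H'.w (u, v)) := by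
  have hpath : IsPathFromTo H' [u, v] u v := by
    refine ⟨⟨isWalk_iff.2 ⟨by simp, ?_, List.isChain_pair.2 he⟩, rfl, rfl⟩, by simpa using huv⟩
    simp [H'.edge_fst _ he, H'.edge_snd _ he]
  refine ⟨⟨[u, v], hpath, by simp [walkWeight]⟩, fun l hl => ?_⟩
  rw [hH.eq_pair_of_isWalkFromTo hend huv hl.1]
  simp [walkWeight]

end IsCore

def extensionEdges (n m : ℕ) (r c r₀ c₀ : ℕ → ℕ) : Finset (ℕ × ℕ) :=
  (Finset.Icc 1 (n - 1)).image (fun x => (r₀ x, r (2 * x - 1)))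
    ∪ (Finset.Icc 1 (m - 1)).image (fun y => (c y, c₀ y))
    ∪ (Finset.Icc 1 (n - 1)).image (fun x => (r₀ x, c₀ m))
    ∪ (Finset.Icc 1 m).image (fun y => (r₀ n, c₀ y))

section ExtensionEdges

variable {n m : ℕ} {r c r₀ c₀ : ℕ → ℕ}

theorem r₀_r_mem_extensionEdges {x : ℕ} (hx1 : 1 ≤ x) (hx : x ≤ n - 1) :
    (r₀ x, r (2 * x - 1)) ∈ extensionEdges n m r c r₀ c₀ := by
  simp only [extensionEdges, Finset.mem_union, Finset.mem_image, Finset.mem_Icc]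
  exact .inl (.inl (.inl ⟨x, ⟨hx1, hx⟩, rfl⟩))

theorem c_c₀_mem_extensionEdges {y : ℕ} (hy1 : 1 ≤ y) (hy : y ≤ m - 1) :
    (c y, c₀ y) ∈ extensionEdges n m r c r₀ c₀ := by
  simp only [extensionEdges, Finset.mem_union, Finset.mem_image, Finset.mem_Icc]
  exact .inl (.inl (.inr ⟨y, ⟨hy1, hy⟩, rfl⟩))

theorem r₀_c₀_last_mem_extensionEdges {x : ℕ} (hx1 : 1 ≤ x) (hx : x ≤ n - 1) :
    (r₀ x, c₀ m) ∈ extensionEdges n m r c r₀ c₀ := by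
  simp only [extensionEdges, Finset.mem_union, Finset.mem_image, Finset.mem_Icc]
  exact .inl (.inr ⟨x, ⟨hx1, hx⟩, rfl⟩)

theorem r₀_last_c₀_mem_extensionEdges {y : ℕ} (hy1 : 1 ≤ y) (hy : y ≤ m) :
    (r₀ n, c₀ y) ∈ extensionEdges n m r c r₀ c₀ := by
  simp only [extensionEdges, Finset.mem_union, Finset.mem_image, Finset.mem_Icc]
  exact .inr ⟨y, ⟨hy1, hy⟩, rfl⟩

end ExtensionEdges

structure FreshTerminals (n m : ℕ) (H : WDigraph) (r c r₀ c₀ : ℕ → ℕ) : Prop where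
  one_le_n : 1 ≤ n
  one_le_m : 1 ≤ m
  r_mem : ∀ x, 1 ≤ x → x ≤ 2 * (n - 1) → r x ∈ H.V
  c_mem : ∀ y, 1 ≤ y → y ≤ m - 1 → c y ∈ H.V
  r₀_notMem : ∀ x, 1 ≤ x → x ≤ n → r₀ x ∉ H.V
  c₀_notMem : ∀ y, 1 ≤ y → y ≤ m → c₀ y ∉ H.V
  r₀_inj : ∀ x x', 1 ≤ x → x ≤ n → 1 ≤ x' → x' ≤ n → r₀ x = r₀ x' → x = x'
  c₀_inj : ∀ y y', 1 ≤ y → y ≤ m → 1 ≤ y' → y' ≤ m → c₀ y = c₀ y' → y = y'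
  r₀_ne_c₀ : ∀ x y, 1 ≤ x → x ≤ n → 1 ≤ y → y ≤ m → r₀ x ≠ c₀ y

namespace FreshTerminals

variable {n m : ℕ} {H H' : WDigraph} {r c r₀ c₀ : ℕ → ℕ}

theorem extensionEdges_cases (hT : FreshTerminals n m H r c r₀ c₀) {e : ℕ × ℕ}
    (he : e ∈ extensionEdges n m r c r₀ c₀) :
    (∃ x, 1 ≤ x ∧ x ≤ n ∧ e.1 = r₀ x ∧ (e.2 ∈ H.V ∨ ∃ y, 1 ≤ y ∧ y ≤ m ∧ e.2 = c₀ y)) ∨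
      (e.1 ∈ H.V ∧ ∃ y, 1 ≤ y ∧ y ≤ m ∧ e.2 = c₀ y) := by
  simp only [extensionEdges, Finset.mem_union, Finset.mem_image, Finset.mem_Icc] at he
  rcases he with (((⟨x, hx, rfl⟩ | ⟨y, hy, rfl⟩) | ⟨x, hx, rfl⟩) | ⟨y, hy, rfl⟩)
  · exact .inl ⟨x, hx.1, by omega, rfl, .inl (hT.r_mem _ (by omega) (by omega))⟩
  · exact .inr ⟨hT.c_mem y hy.1 hy.2, y, hy.1, by omega, rfl⟩
  · exact .inl ⟨x, hx.1, by omega, rfl, .inr ⟨m, hT.one_le_m, le_rfl, rfl⟩⟩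
  · exact .inl ⟨n, hT.one_le_n, le_rfl, rfl, .inr ⟨y, hy.1, hy.2, rfl⟩⟩

theorem isCore (hT : FreshTerminals n m H r c r₀ c₀) (hV : H.V ⊆ H'.V)
    (hE : H'.E = H.E ∪ extensionEdges n m r c r₀ c₀) (hw : ∀ e ∈ H.E, H'.w e = H.w e) :
    H.IsCore H' where
  V_subset := hV
  E_subset := hE ▸ Finset.subset_union_left
  mem_E_of_mem_V u v huv hu hv := by
    rw [hE, Finset.mem_union] at huv
    refine huv.resolve_right fun he => ?_
    rcases hT.extensionEdges_cases he with ⟨x, hx1, hxn, rfl, -⟩ | ⟨-, y, hy1, hym, rfl⟩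
    · exact hT.r₀_notMem x hx1 hxn hu
    · exact hT.c₀_notMem y hy1 hym hv
  mem_V_of_rel_rel p z s hpz hzs := by
    by_contra hz
    obtain ⟨y, hy1, hym, rfl⟩ : ∃ y, 1 ≤ y ∧ y ≤ m ∧ z = c₀ y := by
      rw [hE, Finset.mem_union] at hpz
      rcases hpz with hpz | hpz
      · exact absurd (H.edge_snd _ hpz) hz
      rcases hT.extensionEdges_cases hpz with ⟨x, -, -, -, hz' | hz'⟩ | ⟨-, hz'⟩
      · exact absurd hz' hz
      · exact hz'
      · exact hz'
    rw [hE, Finset.mem_union] at hzs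
    rcases hzs with hzs | hzs
    · exact hz (H.edge_fst _ hzs)
    rcases hT.extensionEdges_cases hzs with ⟨x, hx1, hxn, hx, -⟩ | ⟨hz', -⟩
    · exact hT.r₀_ne_c₀ x y hx1 hxn hy1 hym hx.symm
    · exact hz hz'
  w_eq := hw

theorem eq_of_mem_of_fst_eq_r₀ (hT : FreshTerminals n m H r c r₀ c₀)
    (hE : H'.E = H.E ∪ extensionEdges n m r c r₀ c₀) {x z : ℕ} (hx1 : 1 ≤ x) (hxn : x ≤ n)
    (he : (r₀ x, z) ∈ H'.E) (hz : z ∈ H.V) : x ≤ n - 1 ∧ z = r (2 * x - 1) := by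
  rw [hE, Finset.mem_union] at he
  rcases he with he | he
  · exact absurd (H.edge_fst _ he) (hT.r₀_notMem x hx1 hxn)
  simp only [extensionEdges, Finset.mem_union, Finset.mem_image, Finset.mem_Icc,
    Prod.mk.injEq] at he
  rcases he with (((⟨a, ha, hax, rfl⟩ | ⟨b, hb, hbx, -⟩) | ⟨-, -, -, rfl⟩) | ⟨b, hb, -, rfl⟩)
  · obtain rfl := hT.r₀_inj a x ha.1 (by omega) hx1 hxn hax
    exact ⟨ha.2, rfl⟩
  · exact absurd (hbx ▸ hT.c_mem b hb.1 hb.2) (hT.r₀_notMem x hx1 hxn)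
  · exact absurd hz (hT.c₀_notMem m hT.one_le_m le_rfl)
  · exact absurd hz (hT.c₀_notMem b hb.1 hb.2)

theorem eq_of_mem_of_snd_eq_c₀ (hT : FreshTerminals n m H r c r₀ c₀)
    (hE : H'.E = H.E ∪ extensionEdges n m r c r₀ c₀) {y z : ℕ} (hy1 : 1 ≤ y) (hym : y ≤ m)
    (he : (z, c₀ y) ∈ H'.E) (hz : z ∈ H.V) : y ≤ m - 1 ∧ z = c y := by
  rw [hE, Finset.mem_union] at he
  rcases he with he | he
  · exact absurd (H.edge_snd _ he) (hT.c₀_notMem y hy1 hym)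
  simp only [extensionEdges, Finset.mem_union, Finset.mem_image, Finset.mem_Icc,
    Prod.mk.injEq] at he
  rcases he with (((⟨a, ha, -, hay⟩ | ⟨b, hb, rfl, hby⟩) | ⟨a, ha, rfl, -⟩) | ⟨-, -, rfl, -⟩)
  · exact absurd (hay ▸ hT.r_mem _ (by omega) (by omega)) (hT.c₀_notMem y hy1 hym)
  · obtain rfl := hT.c₀_inj b y hb.1 (by omega) hy1 hym hby
    exact ⟨hb.2, rfl⟩
  · exact absurd hz (hT.r₀_notMem a ha.1 (by omega))
  · exact absurd hz (hT.r₀_notMem n hT.one_le_n le_rfl)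

theorem eq_or_eq_of_mem_r₀_c₀ (hT : FreshTerminals n m H r c r₀ c₀)
    (hE : H'.E = H.E ∪ extensionEdges n m r c r₀ c₀) {x y : ℕ} (hx1 : 1 ≤ x) (hxn : x ≤ n)
    (hy1 : 1 ≤ y) (hym : y ≤ m) (he : (r₀ x, c₀ y) ∈ H'.E) : x = n ∨ y = m := by
  rw [hE, Finset.mem_union] at he
  rcases he with he | he
  · exact absurd (H.edge_fst _ he) (hT.r₀_notMem x hx1 hxn)
  simp only [extensionEdges, Finset.mem_union, Finset.mem_image, Finset.mem_Icc,
    Prod.mk.injEq] at he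
  rcases he with (((⟨a, ha, -, hay⟩ | ⟨b, hb, hbx, -⟩) | ⟨-, -, -, hmy⟩) | ⟨-, -, hnx, -⟩)
  · exact absurd (hay ▸ hT.r_mem _ (by omega) (by omega)) (hT.c₀_notMem y hy1 hym)
  · exact absurd (hbx ▸ hT.c_mem b hb.1 hb.2) (hT.r₀_notMem x hx1 hxn)
  · exact .inr (hT.c₀_inj m y hT.one_le_m le_rfl hy1 hym hmy).symm
  · exact .inl (hT.r₀_inj n x hT.one_le_n le_rfl hx1 hxn hnx).symm

theorem hasDistW_of_lt (hT : FreshTerminals n m H r c r₀ c₀)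
    (hE : H'.E = H.E ∪ extensionEdges n m r c r₀ c₀) (hH : H.IsCore H') {x y : ℕ} {d : ℤ}
    (hx1 : 1 ≤ x) (hx : x < n) (hy1 : 1 ≤ y) (hy : y < m)
    (hd : HasDistW H H.w (r (2 * x - 1)) (c y) d) :
    HasDistW H' H'.w (r₀ x) (c₀ y) (H'.w (r₀ x, r (2 * x - 1)) + d + H'.w (c y, c₀ y)) :=
  hH.hasDistW_cons_append hd (hT.r₀_notMem x hx1 hx.le) (hT.c₀_notMem y hy1 hy.le)
    (hT.r₀_ne_c₀ x y hx1 hx.le hy1 hy.le)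
    (hE ▸ Finset.mem_union_right _ (r₀_r_mem_extensionEdges hx1 (by omega)))
    (hE ▸ Finset.mem_union_right _ (c_c₀_mem_extensionEdges hy1 (by omega)))
    (fun he => by have := hT.eq_or_eq_of_mem_r₀_c₀ hE hx1 hx.le hy1 hy.le he; omega)
    (fun _ hz he => (hT.eq_of_mem_of_fst_eq_r₀ hE hx1 hx.le he hz).2)
    (fun _ hz he => (hT.eq_of_mem_of_snd_eq_c₀ hE hy1 hy.le he hz).2)

theorem hasDistW_last_row (hT : FreshTerminals n m H r c r₀ c₀)
    (hE : H'.E = H.E ∪ extensionEdges n m r c r₀ c₀) (hH : H.IsCore H') {y : ℕ}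
    (hy1 : 1 ≤ y) (hy : y ≤ m) : HasDistW H' H'.w (r₀ n) (c₀ y) (H'.w (r₀ n, c₀ y)) :=
  hH.hasDistW_pair
    (.inl fun _ hz he => (Nat.sub_lt hT.one_le_n Nat.one_pos).not_ge
      (hT.eq_of_mem_of_fst_eq_r₀ hE hT.one_le_n le_rfl he hz).1)
    (hT.r₀_ne_c₀ n y hT.one_le_n le_rfl hy1 hy)
    (hE ▸ Finset.mem_union_right _ (r₀_last_c₀_mem_extensionEdges hy1 hy))

theorem hasDistW_last_column (hT : FreshTerminals n m H r c r₀ c₀)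
    (hE : H'.E = H.E ∪ extensionEdges n m r c r₀ c₀) (hH : H.IsCore H') {x : ℕ}
    (hx1 : 1 ≤ x) (hx : x < n) : HasDistW H' H'.w (r₀ x) (c₀ m) (H'.w (r₀ x, c₀ m)) :=
  hH.hasDistW_pair
    (.inr fun _ hz he => (Nat.sub_lt hT.one_le_m Nat.one_pos).not_ge
      (hT.eq_of_mem_of_snd_eq_c₀ hE hT.one_le_m le_rfl he hz).1)
    (hT.r₀_ne_c₀ x m hx1 hx.le hT.one_le_m le_rfl)
    (hE ▸ Finset.mem_union_right _ (r₀_c₀_last_mem_extensionEdges hx1 (by omega)))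

end FreshTerminals

end WDigraph

theorem emulator_extension_general (n m : ℕ) (hn : 2 ≤ n) (hm : 2 ≤ m)
    (P : ℕ → ℕ → ℤ) (U V : ℕ → ℤ) (M : ℕ → ℕ → ℤ)
    (hMdef : ∀ x y, 1 ≤ x → x ≤ n → 1 ≤ y → y ≤ m →
      M x y = U x + V y +
        ∑ i ∈ Finset.Icc (2 * x - 1) (2 * (n - 1)),
          ∑ j ∈ Finset.Icc y (m - 1), P i j)
    (H : WDigraph) (r c : ℕ → ℕ)
    (hrV : ∀ x, 1 ≤ x → x ≤ 2 * (n - 1) → r x ∈ H.V)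
    (hcV : ∀ y, 1 ≤ y → y ≤ m - 1 → c y ∈ H.V)
    (hHdist : ∀ x y, 1 ≤ x → x ≤ 2 * (n - 1) → 1 ≤ y → y ≤ m - 1 →
      HasDistW H H.w (r x) (c y)
        (∑ i ∈ Finset.Icc x (2 * (n - 1)), ∑ j ∈ Finset.Icc y (m - 1), P i j))
    (r₀ c₀ : ℕ → ℕ)
    (hr₀fresh : ∀ x, 1 ≤ x → x ≤ n → r₀ x ∉ H.V)
    (hc₀fresh : ∀ y, 1 ≤ y → y ≤ m → c₀ y ∉ H.V)
    (hr₀Inj : ∀ x x', 1 ≤ x → x ≤ n → 1 ≤ x' → x' ≤ n → r₀ x = r₀ x' → x = x')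
    (hc₀Inj : ∀ y y', 1 ≤ y → y ≤ m → 1 ≤ y' → y' ≤ m → c₀ y = c₀ y' → y = y')
    (hr₀c₀ : ∀ x y, 1 ≤ x → x ≤ n → 1 ≤ y → y ≤ m → r₀ x ≠ c₀ y)
    (H' : WDigraph)
    (hV' : H'.V = H.V ∪ (Finset.Icc 1 n).image r₀ ∪ (Finset.Icc 1 m).image c₀)
    (hE' : H'.E = H.E
      ∪ (Finset.Icc 1 (n - 1)).image (fun x => (r₀ x, r (2 * x - 1)))
      ∪ (Finset.Icc 1 (m - 1)).image (fun y => (c y, c₀ y))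
      ∪ (Finset.Icc 1 (n - 1)).image (fun x => (r₀ x, c₀ m))
      ∪ (Finset.Icc 1 m).image (fun y => (r₀ n, c₀ y)))
    (hwOld : ∀ e ∈ H.E, H'.w e = H.w e)
    (hw₁ : ∀ x, 1 ≤ x → x ≤ n - 1 → H'.w (r₀ x, r (2 * x - 1)) = U x)
    (hw₂ : ∀ y, 1 ≤ y → y ≤ m - 1 → H'.w (c y, c₀ y) = V y)
    (hw₃ : ∀ x, 1 ≤ x → x ≤ n - 1 → H'.w (r₀ x, c₀ m) = U x + V m)
    (hw₄ : ∀ y, 1 ≤ y → y ≤ m → H'.w (r₀ n, c₀ y) = U n + V y) :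
    ∀ x y, 1 ≤ x → x ≤ n → 1 ≤ y → y ≤ m →
      HasDistW H' H'.w (r₀ x) (c₀ y) (M x y) := by
  intro x y hx1 hxn hy1 hym
  have hT : WDigraph.FreshTerminals n m H r c r₀ c₀ :=
    ⟨by omega, by omega, hrV, hcV, hr₀fresh, hc₀fresh, hr₀Inj, hc₀Inj, hr₀c₀⟩
  have hE : H'.E = H.E ∪ WDigraph.extensionEdges n m r c r₀ c₀ := by
    simp only [hE', WDigraph.extensionEdges, Finset.union_assoc]
  have hH : H.IsCore H' :=
    hT.isCore (hV' ▸ Finset.subset_union_left.trans Finset.subset_union_left) hE hwOld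
  obtain ⟨hx, hy⟩ | hx | ⟨hx, hy⟩ : (x < n ∧ y < m) ∨ x = n ∨ (x < n ∧ y = m) := by omega
  · have := hT.hasDistW_of_lt hE hH hx1 hx hy1 hy
      (hHdist (2 * x - 1) y (by omega) (by omega) hy1 (by omega))
    rwa [hw₁ x hx1 (by omega), hw₂ y hy1 (by omega), add_right_comm,
      ← hMdef x y hx1 hxn hy1 hym] at this
  · subst x
    rw [hMdef n y hx1 hxn hy1 hym, Finset.Icc_eq_empty (by omega), Finset.sum_empty, add_zero,
      ← hw₄ y hy1 hym]
    exact hT.hasDistW_last_row hE hH hy1 hym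
  · subst y
    rw [hMdef x m hx1 hxn hy1 hym, Finset.Icc_eq_empty (show ¬m ≤ m - 1 by omega)]
    simp only [Finset.sum_empty, Finset.sum_const_zero, add_zero]
    rw [← hw₃ x hx1 (by omega)]
    exact hT.hasDistW_last_column hE hH hx1 hx

theorem emulator_extension (n m : ℕ) (hn : 2 ≤ n) (hm : 2 ≤ m)
    (P : ℕ → ℕ → ℤ) (U V : ℕ → ℤ) (M : ℕ → ℕ → ℤ)
    (hPnonneg : ∀ i j, 1 ≤ i → i ≤ 2 * (n - 1) → 1 ≤ j → j ≤ m - 1 → 0 ≤ P i j)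
    (hMdef : ∀ x y, 1 ≤ x → x ≤ n → 1 ≤ y → y ≤ m →
      M x y = U x + V y +
        ∑ i ∈ Finset.Icc (2 * x - 1) (2 * (n - 1)),
          ∑ j ∈ Finset.Icc y (m - 1), P i j)
    (H : WDigraph) (r c : ℕ → ℕ)
    (hDAG : IsDAG H)
    (hrV : ∀ x, 1 ≤ x → x ≤ 2 * (n - 1) → r x ∈ H.V)
    (hcV : ∀ y, 1 ≤ y → y ≤ m - 1 → c y ∈ H.V)
    (hrInj : ∀ x x', 1 ≤ x → x ≤ 2 * (n - 1) → 1 ≤ x' → x' ≤ 2 * (n - 1) →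
      r x = r x' → x = x')
    (hcInj : ∀ y y', 1 ≤ y → y ≤ m - 1 → 1 ≤ y' → y' ≤ m - 1 → c y = c y' → y = y')
    (hrc : ∀ x y, 1 ≤ x → x ≤ 2 * (n - 1) → 1 ≤ y → y ≤ m - 1 → r x ≠ c y)
    (hHdist : ∀ x y, 1 ≤ x → x ≤ 2 * (n - 1) → 1 ≤ y → y ≤ m - 1 →
      HasDistW H H.w (r x) (c y)
        (∑ i ∈ Finset.Icc x (2 * (n - 1)), ∑ j ∈ Finset.Icc y (m - 1), P i j))
    (hrNoIn : ∀ x, 1 ≤ x → x ≤ 2 * (n - 1) → ∀ e ∈ H.E, e.2 ≠ r x)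
    (hcNoOut : ∀ y, 1 ≤ y → y ≤ m - 1 → ∀ e ∈ H.E, e.1 ≠ c y)
    (r₀ c₀ : ℕ → ℕ)
    (hr₀fresh : ∀ x, 1 ≤ x → x ≤ n → r₀ x ∉ H.V)
    (hc₀fresh : ∀ y, 1 ≤ y → y ≤ m → c₀ y ∉ H.V)
    (hr₀Inj : ∀ x x', 1 ≤ x → x ≤ n → 1 ≤ x' → x' ≤ n → r₀ x = r₀ x' → x = x')
    (hc₀Inj : ∀ y y', 1 ≤ y → y ≤ m → 1 ≤ y' → y' ≤ m → c₀ y = c₀ y' → y = y')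
    (hr₀c₀ : ∀ x y, 1 ≤ x → x ≤ n → 1 ≤ y → y ≤ m → r₀ x ≠ c₀ y)
    (H' : WDigraph)
    (hV' : H'.V = H.V ∪ (Finset.Icc 1 n).image r₀ ∪ (Finset.Icc 1 m).image c₀)
    (hE' : H'.E = H.E
      ∪ (Finset.Icc 1 (n - 1)).image (fun x => (r₀ x, r (2 * x - 1)))
      ∪ (Finset.Icc 1 (m - 1)).image (fun y => (c y, c₀ y))
      ∪ (Finset.Icc 1 (n - 1)).image (fun x => (r₀ x, c₀ m))
      ∪ (Finset.Icc 1 m).image (fun y => (r₀ n, c₀ y)))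
    (hwOld : ∀ e ∈ H.E, H'.w e = H.w e)
    (hw₁ : ∀ x, 1 ≤ x → x ≤ n - 1 → H'.w (r₀ x, r (2 * x - 1)) = U x)
    (hw₂ : ∀ y, 1 ≤ y → y ≤ m - 1 → H'.w (c y, c₀ y) = V y)
    (hw₃ : ∀ x, 1 ≤ x → x ≤ n - 1 → H'.w (r₀ x, c₀ m) = U x + V m)
    (hw₄ : ∀ y, 1 ≤ y → y ≤ m → H'.w (r₀ n, c₀ y) = U n + V y) :
    ∀ x y, 1 ≤ x → x ≤ n → 1 ≤ y → y ≤ m →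
      HasDistW H' H'.w (r₀ x) (c₀ y) (M x y) :=
  emulator_extension_general n m hn hm P U V M hMdef H r c hrV hcV hHdist r₀ c₀ hr₀fresh hc₀fresh
    hr₀Inj hc₀Inj hr₀c₀ H' hV' hE' hwOld hw₁ hw₂ hw₃ hw₄
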